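/- Let U = (U_i)_{i∈I} be a moderate admissible covering of X and w a continuous weight whose associated weight m := m_w is admissible and satisfies the m-cover condition for U. For a sequence (λ_i)_{i∈I} of nonnegative reals set λ_i^+ := Σ_{j ∈ i*} λ_j where i* := {j ∈ I : U_i ∩ U_j ≠ ∅}. Then for each 1 ≤ p ≤ ∞ there exists a constant C > 0 such that ‖Σ_{i∈I} λ_i^+ μ(U_i)^{-1} χ_{U_i}‖_{L^p_w} ≤ C · ‖Σ_{i∈I} λ_i μ(U_i)^{-1} χ_{U_i}‖_{L^p_w} for all such sequences. -/

import Mathlib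

open MeasureTheory ENNReal
open scoped ENNReal NNReal

noncomputable section

/-- The weight on `X × X` associated to a weight `w` on `X`. -/
def mw {X : Type*} (w : X → ℝ) (x y : X) : ℝ :=
  max (w x / w y) (w y / w x)

/-- A moderate admissible covering `U = (U_i)_{i∈I}` of `X`. -/
structure ModCover (X : Type*) [TopologicalSpace X] [MeasurableSpace X]
    (μ : MeasureTheory.Measure X) (I : Type*) where
  U : I → Set X
  measU : ∀ i, MeasurableSet (U i)
  relCompact : ∀ i, IsCompact (closure (U i))
  interiorNonempty : ∀ i, (interior (U i)).Nonempty
  covers : (⋃ i, U i) = Set.univ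
  N : ℕ
  overlapFin : ∀ j : I, {i : I | (U i ∩ U j).Nonempty}.Finite
  overlapBound : ∀ j : I, {i : I | (U i ∩ U j).Nonempty}.ncard ≤ N
  measLower : ℝ≥0∞
  measLowerPos : 0 < measLower
  lower : ∀ i, measLower ≤ μ (U i)
  finiteMeas : ∀ i, μ (U i) < ⊤
  Ctilde : ℝ≥0∞
  CtildeFin : Ctilde < ⊤
  moderate : ∀ i j, (U i ∩ U j).Nonempty → μ (U i) ≤ Ctilde * μ (U j)

/-!
Fix `x ∈ Uᵢ` and `j ∈ i*`. For every `y ∈ Uⱼ`, the moderateness of the covering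
(`μ(Uⱼ) ≤ C̃ μ(Uᵢ)`) and the `m`-cover condition applied through a point of `Uᵢ ∩ Uⱼ`
(`w(x) ≤ C_{m,U}² w(y)`) give `λⱼ μ(Uᵢ)⁻¹ w(x) ≤ C̃ C_{m,U}² F(y)`, where
`F = (∑ₖ λₖ μ(Uₖ)⁻¹ χ_{Uₖ}) w`. For `p = ∞` choose `y` off a null set; for `p < ∞` average the
`p`-th power of this bound over `y ∈ Uⱼ`. At `x` at most `N²` pairs `(i, j)` contribute to
`(∑ᵢ λᵢ⁺ μ(Uᵢ)⁻¹ χ_{Uᵢ}) w`, and every point lies in at most `N` of the `Uⱼ`, so integrating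
gives the bound by a multiple of `‖F‖_p`.
-/

namespace ENNReal

variable {ι : Type*} {f : ι → ℝ≥0∞} {s : Set ι} {n : ℕ}

lemma tsum_le_of_forall_notMem_eq_zero (hs : s.Finite) (hcard : s.ncard ≤ n)
    (hf : ∀ i ∉ s, f i = 0) {b : ℝ≥0∞} (hb : ∀ i ∈ s, f i ≤ b) : ∑' i, f i ≤ n * b := by
  rw [tsum_eq_sum (s := hs.toFinset) fun i hi => hf i (by simpa using hi)]
  calc ∑ i ∈ hs.toFinset, f i ≤ hs.toFinset.card • b :=
        Finset.sum_le_card_nsmul _ _ _ fun i hi => hb i (by simpa using hi)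
    _ ≤ n * b := by
        rw [nsmul_eq_mul, ← Set.ncard_eq_toFinset_card s hs]
        gcongr

lemma rpow_tsum_le_of_forall_notMem_eq_zero (hs : s.Finite) (hcard : s.ncard ≤ n)
    (hf : ∀ i ∉ s, f i = 0) {p : ℝ} (hp : 1 ≤ p) :
    (∑' i, f i) ^ p ≤ (n : ℝ≥0∞) ^ (p - 1) * ∑' i, f i ^ p := by
  have hmem : ∀ i ∉ hs.toFinset, i ∉ s := fun i hi => by simpa using hi
  rw [tsum_eq_sum fun i hi => hf i (hmem i hi),
    tsum_eq_sum (s := hs.toFinset) fun i hi => by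
      rw [hf i (hmem i hi), zero_rpow_of_pos (by linarith)]]
  refine (rpow_sum_le_const_mul_sum_rpow _ _ hp).trans ?_
  rw [← Set.ncard_eq_toFinset_card s hs]
  gcongr

end ENNReal

lemma MeasureTheory.eLpNorm_le_rpow_mul_of_lintegral_rpow_le {α : Type*} [MeasurableSpace α]
    {μ : Measure α} {f g : α → ℝ≥0∞} {p : ℝ≥0∞} (hp0 : p ≠ 0) (hpt : p ≠ ⊤) {D : ℝ≥0∞}
    (h : ∫⁻ x, g x ^ p.toReal ∂μ ≤ D * ∫⁻ x, f x ^ p.toReal ∂μ) :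
    eLpNorm g p μ ≤ D ^ (1 / p.toReal) * eLpNorm f p μ := by
  simp only [eLpNorm_eq_lintegral_rpow_enorm_toReal hp0 hpt, enorm_eq_self]
  rw [← ENNReal.mul_rpow_of_nonneg _ _ (by positivity)]
  exact ENNReal.rpow_le_rpow h (by positivity)

lemma le_mul_of_mw_le {X : Type*} {w : X → ℝ} {x y : X} (hy : 0 < w y) {C : ℝ}
    (h : mw w x y ≤ C) : w x ≤ C * w y :=
  (div_le_iff₀ hy).mp ((le_max_left _ _).trans h)

namespace ModCover

variable {X : Type*} [TopologicalSpace X] [MeasurableSpace X] {μ : Measure X} {I : Type*}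

section

variable (𝒰 : ModCover X μ I)

/-- The index set `i*` of the paper. -/
def neighbors (i : I) : Set I := {j | (𝒰.U i ∩ 𝒰.U j).Nonempty}

lemma mem_neighbors_comm {i j : I} : j ∈ 𝒰.neighbors i ↔ i ∈ 𝒰.neighbors j := by
  simp only [neighbors, Set.mem_ofPred_eq, Set.inter_comm]

lemma neighbors_finite (i : I) : (𝒰.neighbors i).Finite :=
  (𝒰.overlapFin i).subset fun _ => 𝒰.mem_neighbors_comm.mp

lemma ncard_neighbors_le (i : I) : (𝒰.neighbors i).ncard ≤ 𝒰.N :=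
  (Set.ncard_le_ncard (fun _ => 𝒰.mem_neighbors_comm.mp) (𝒰.overlapFin i)).trans
    (𝒰.overlapBound i)

lemma measure_le_of_mem_neighbors {i j : I} (hij : j ∈ 𝒰.neighbors i) :
    μ (𝒰.U i) ≤ 𝒰.Ctilde * μ (𝒰.U j) :=
  𝒰.moderate i j hij

lemma measure_ne_zero (i : I) : μ (𝒰.U i) ≠ 0 :=
  (𝒰.measLowerPos.trans_le (𝒰.lower i)).ne'

lemma measure_ne_top (i : I) : μ (𝒰.U i) ≠ ⊤ :=
  (𝒰.finiteMeas i).ne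

lemma setOf_mem_subset_neighbors {x : X} {k : I} (hx : x ∈ 𝒰.U k) :
    {i | x ∈ 𝒰.U i} ⊆ 𝒰.neighbors k :=
  fun _ hi => ⟨x, hx, hi⟩

lemma exists_mem (x : X) : ∃ k, x ∈ 𝒰.U k :=
  Set.mem_iUnion.mp (𝒰.covers ▸ Set.mem_univ x)

lemma setOf_mem_finite (x : X) : {i | x ∈ 𝒰.U i}.Finite :=
  let ⟨_, hk⟩ := 𝒰.exists_mem x
  (𝒰.neighbors_finite _).subset (𝒰.setOf_mem_subset_neighbors hk)

lemma ncard_setOf_mem_le (x : X) : {i | x ∈ 𝒰.U i}.ncard ≤ 𝒰.N :=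
  let ⟨_, hk⟩ := 𝒰.exists_mem x
  (Set.ncard_le_ncard (𝒰.setOf_mem_subset_neighbors hk) (𝒰.neighbors_finite _)).trans
    (𝒰.ncard_neighbors_le _)

lemma tsum_indicator_le (x : X) {f : I → X → ℝ≥0∞} {b : ℝ≥0∞}
    (hb : ∀ i, x ∈ 𝒰.U i → f i x ≤ b) :
    ∑' i, (𝒰.U i).indicator (f i) x ≤ 𝒰.N * b :=
  ENNReal.tsum_le_of_forall_notMem_eq_zero (f := fun i => (𝒰.U i).indicator (f i) x)
    (𝒰.setOf_mem_finite x) (𝒰.ncard_setOf_mem_le x)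
    (fun i hi => Set.indicator_of_notMem (s := 𝒰.U i) hi (f i))
    (fun i hi => (Set.indicator_of_mem (s := 𝒰.U i) hi (f i)).trans_le (hb i hi))

lemma tsum_tsum_indicator_neighbors_le (f : I → ℝ≥0∞) :
    ∑' i, ∑' j, (𝒰.neighbors i).indicator f j ≤ 𝒰.N * ∑' j, f j := by
  rw [ENNReal.tsum_comm, ← ENNReal.tsum_mul_left]
  refine ENNReal.tsum_le_tsum fun j => ?_
  have hsymm : ∀ i, (𝒰.neighbors i).indicator f j = (𝒰.neighbors j).indicator (fun _ => f j) i :=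
    fun i => by
      by_cases h : j ∈ 𝒰.neighbors i
      · simp [h, 𝒰.mem_neighbors_comm.mp h]
      · simp [h, mt 𝒰.mem_neighbors_comm.mpr h]
  rw [tsum_congr hsymm]
  exact ENNReal.tsum_le_of_forall_notMem_eq_zero (𝒰.neighbors_finite j) (𝒰.ncard_neighbors_le j)
    (fun _ hi => Set.indicator_of_notMem hi _) (fun _ hi => (Set.indicator_of_mem hi _).le)

lemma tsum_setLIntegral_le [Countable I] {f : X → ℝ≥0∞} (hf : Measurable f) :
    ∑' i, ∫⁻ x in 𝒰.U i, f x ∂μ ≤ 𝒰.N * ∫⁻ x, f x ∂μ := by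
  rw [tsum_congr fun i => (lintegral_indicator (𝒰.measU i) f).symm,
    ← lintegral_tsum fun i => (hf.indicator (𝒰.measU i)).aemeasurable,
    ← lintegral_const_mul _ hf]
  exact lintegral_mono fun x => 𝒰.tsum_indicator_le x fun _ _ => le_rfl

lemma exists_mem_le_eLpNorm_top (f : X → ℝ≥0∞) (i : I) :
    ∃ y ∈ 𝒰.U i, f y ≤ eLpNorm f ⊤ μ := by
  have : (ae (μ.restrict (𝒰.U i))).NeBot :=
    ae_neBot.mpr (by simpa [Measure.restrict_eq_zero] using 𝒰.measure_ne_zero i)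
  exact ((ae_restrict_mem (𝒰.measU i)).and (ae_restrict_of_ae ae_le_eLpNormEssSup)).exists

end

def NeighborComparable (𝒰 : ModCover X μ I) (W : X → ℝ≥0∞) (K : ℝ≥0∞) : Prop :=
  ∀ i j, j ∈ 𝒰.neighbors i → ∀ x ∈ 𝒰.U i, ∀ y ∈ 𝒰.U j, W x ≤ K * W y

/-- With `W = w`, the `L^p` norm of `𝒰.bumpSum c W` is the norm of `c` in `(L^p_w)^♮`. -/
def bumpSum (𝒰 : ModCover X μ I) (c : I → ℝ≥0∞) (W : X → ℝ≥0∞) (x : X) : ℝ≥0∞ :=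
  (∑' i, c i * (μ (𝒰.U i))⁻¹ * (𝒰.U i).indicator 1 x) * W x

/-- The sequence `c⁺` of the paper. -/
def neighborSum (𝒰 : ModCover X μ I) (c : I → ℝ≥0∞) (i : I) : ℝ≥0∞ :=
  ∑' j, (𝒰.neighbors i).indicator c j

variable {𝒰 : ModCover X μ I} {W : X → ℝ≥0∞} {K : ℝ≥0∞}

lemma inv_measure_le_of_mem_neighbors {i j : I} (hij : j ∈ 𝒰.neighbors i) :
    (μ (𝒰.U i))⁻¹ ≤ 𝒰.Ctilde * (μ (𝒰.U j))⁻¹ := by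
  rw [← div_eq_mul_inv,
    ENNReal.le_div_iff_mul_le (.inl (𝒰.measure_ne_zero j)) (.inl (𝒰.measure_ne_top j))]
  calc (μ (𝒰.U i))⁻¹ * μ (𝒰.U j) ≤ (μ (𝒰.U i))⁻¹ * (𝒰.Ctilde * μ (𝒰.U i)) := by
        gcongr
        exact 𝒰.measure_le_of_mem_neighbors (𝒰.mem_neighbors_comm.mp hij)
    _ = 𝒰.Ctilde := by
        rw [mul_left_comm, ENNReal.inv_mul_cancel (𝒰.measure_ne_zero i) (𝒰.measure_ne_top i),
          mul_one]

lemma mul_inv_measure_mul_le_bumpSum (hW : 𝒰.NeighborComparable W K) (c : I → ℝ≥0∞)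
    {i j : I} (hij : j ∈ 𝒰.neighbors i) {x y : X} (hx : x ∈ 𝒰.U i) (hy : y ∈ 𝒰.U j) :
    c j * (μ (𝒰.U i))⁻¹ * W x ≤ 𝒰.Ctilde * K * 𝒰.bumpSum c W y := by
  have hterm : c j * (μ (𝒰.U j))⁻¹ * W y ≤ 𝒰.bumpSum c W y := by
    unfold bumpSum
    gcongr
    simpa [hy] using ENNReal.le_tsum (f := fun k => c k * (μ (𝒰.U k))⁻¹ * (𝒰.U k).indicator 1 y) j
  calc c j * (μ (𝒰.U i))⁻¹ * W x
      ≤ c j * (𝒰.Ctilde * (μ (𝒰.U j))⁻¹) * (K * W y) := by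
        gcongr
        exacts [inv_measure_le_of_mem_neighbors hij, hW i j hij x hx y hy]
    _ = 𝒰.Ctilde * K * (c j * (μ (𝒰.U j))⁻¹ * W y) := by ring
    _ ≤ 𝒰.Ctilde * K * 𝒰.bumpSum c W y := by gcongr

lemma bumpSum_neighborSum (c : I → ℝ≥0∞) (x : X) :
    𝒰.bumpSum (𝒰.neighborSum c) W x =
      ∑' i, (𝒰.U i).indicator (fun x => ∑' j, (𝒰.neighbors i).indicator c j *
        (μ (𝒰.U i))⁻¹ * W x) x := by
  rw [bumpSum, ← ENNReal.tsum_mul_right]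
  refine tsum_congr fun i => ?_
  by_cases hx : x ∈ 𝒰.U i
  · simp [hx, neighborSum, ENNReal.tsum_mul_right]
  · simp [hx]

lemma measurable_bumpSum [Countable I] (hWm : Measurable W) (c : I → ℝ≥0∞) :
    Measurable (𝒰.bumpSum c W) :=
  (Measurable.tsum fun i =>
    measurable_const.mul (measurable_const.indicator (𝒰.measU i))).mul hWm

lemma eLpNorm_top_bumpSum_neighborSum_le (hW : 𝒰.NeighborComparable W K) (c : I → ℝ≥0∞) :
    eLpNorm (𝒰.bumpSum (𝒰.neighborSum c) W) ⊤ μ ≤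
      𝒰.N * (𝒰.N * (𝒰.Ctilde * K)) * eLpNorm (𝒰.bumpSum c W) ⊤ μ := by
  rw [eLpNorm_exponent_top]
  refine eLpNormEssSup_le_of_ae_enorm_bound (.of_forall fun x => ?_)
  rw [enorm_eq_self, bumpSum_neighborSum, mul_assoc, mul_assoc]
  refine 𝒰.tsum_indicator_le x fun i hx => ?_
  refine ENNReal.tsum_le_of_forall_notMem_eq_zero (𝒰.neighbors_finite i)
    (𝒰.ncard_neighbors_le i) (fun j hj => by simp [hj]) fun j hj => ?_
  obtain ⟨y, hy, hyc⟩ := 𝒰.exists_mem_le_eLpNorm_top (𝒰.bumpSum c W) j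
  rw [Set.indicator_of_mem hj]
  exact (mul_inv_measure_mul_le_bumpSum hW c hj hx hy).trans (by gcongr)

lemma measure_mul_setLAverage_le {i j : I} (hij : j ∈ 𝒰.neighbors i) (f : X → ℝ≥0∞) :
    μ (𝒰.U i) * ⨍⁻ y in 𝒰.U j, f y ∂μ ≤ 𝒰.Ctilde * ∫⁻ y in 𝒰.U j, f y ∂μ := by
  rw [setLAverage_eq]
  calc μ (𝒰.U i) * ((∫⁻ y in 𝒰.U j, f y ∂μ) / μ (𝒰.U j))
      ≤ 𝒰.Ctilde * μ (𝒰.U j) * ((∫⁻ y in 𝒰.U j, f y ∂μ) / μ (𝒰.U j)) := by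
        gcongr
        exact 𝒰.measure_le_of_mem_neighbors hij
    _ = 𝒰.Ctilde * ∫⁻ y in 𝒰.U j, f y ∂μ := by
        rw [mul_assoc, ENNReal.mul_div_cancel (𝒰.measure_ne_zero j) (𝒰.measure_ne_top j)]

lemma tsum_measure_mul_tsum_setLAverage_le [Countable I] {f : X → ℝ≥0∞} (hf : Measurable f) :
    ∑' i, μ (𝒰.U i) * ∑' j, (𝒰.neighbors i).indicator (fun j => ⨍⁻ y in 𝒰.U j, f y ∂μ) j ≤
      𝒰.Ctilde * 𝒰.N * 𝒰.N * ∫⁻ x, f x ∂μ :=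
  calc ∑' i, μ (𝒰.U i) * ∑' j, (𝒰.neighbors i).indicator (fun j => ⨍⁻ y in 𝒰.U j, f y ∂μ) j
      ≤ ∑' i, ∑' j, (𝒰.neighbors i).indicator
          (fun j => 𝒰.Ctilde * ∫⁻ y in 𝒰.U j, f y ∂μ) j := by
        refine ENNReal.tsum_le_tsum fun i => ?_
        rw [← ENNReal.tsum_mul_left]
        refine ENNReal.tsum_le_tsum fun j => ?_
        by_cases hij : j ∈ 𝒰.neighbors i
        · simpa [hij] using measure_mul_setLAverage_le hij f
        · simp [hij]
    _ ≤ 𝒰.N * ∑' j, 𝒰.Ctilde * ∫⁻ y in 𝒰.U j, f y ∂μ := 𝒰.tsum_tsum_indicator_neighbors_le _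
    _ ≤ 𝒰.N * (𝒰.Ctilde * (𝒰.N * ∫⁻ x, f x ∂μ)) := by
        rw [ENNReal.tsum_mul_left]
        gcongr
        exact 𝒰.tsum_setLIntegral_le hf
    _ = 𝒰.Ctilde * 𝒰.N * 𝒰.N * ∫⁻ x, f x ∂μ := by ring

lemma rpow_mul_inv_measure_mul_le_setLAverage (hW : 𝒰.NeighborComparable W K) (c : I → ℝ≥0∞)
    {p : ℝ} (hp : 0 ≤ p) {i j : I} (hij : j ∈ 𝒰.neighbors i) {x : X} (hx : x ∈ 𝒰.U i) :
    (c j * (μ (𝒰.U i))⁻¹ * W x) ^ p ≤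
      ⨍⁻ y in 𝒰.U j, (𝒰.Ctilde * K * 𝒰.bumpSum c W y) ^ p ∂μ := by
  rw [← setLAverage_const (𝒰.measure_ne_zero j) (𝒰.measure_ne_top j) ((c j * _ * W x) ^ p)]
  exact laverage_mono_ae (ae_restrict_of_forall_mem (𝒰.measU j) fun y hy =>
    ENNReal.rpow_le_rpow (mul_inv_measure_mul_le_bumpSum hW c hij hx hy) hp)

lemma rpow_bumpSum_neighborSum_le (hW : 𝒰.NeighborComparable W K) (c : I → ℝ≥0∞) {p : ℝ}
    (hp : 1 ≤ p) (x : X) :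
    𝒰.bumpSum (𝒰.neighborSum c) W x ^ p ≤ (𝒰.N : ℝ≥0∞) ^ (p - 1) * (𝒰.N : ℝ≥0∞) ^ (p - 1) *
      ∑' i, (𝒰.U i).indicator (fun _ => ∑' j, (𝒰.neighbors i).indicator
        (fun j => ⨍⁻ y in 𝒰.U j, (𝒰.Ctilde * K * 𝒰.bumpSum c W y) ^ p ∂μ) j) x := by
  have hp0 : 0 < p := by linarith
  rw [bumpSum_neighborSum, mul_assoc, ← ENNReal.tsum_mul_left]
  refine (ENNReal.rpow_tsum_le_of_forall_notMem_eq_zero (𝒰.setOf_mem_finite x)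
    (𝒰.ncard_setOf_mem_le x) (fun i hi => Set.indicator_of_notMem (s := 𝒰.U i) hi _) hp).trans ?_
  gcongr with i
  by_cases hx : x ∈ 𝒰.U i
  · simp only [Set.indicator_of_mem hx]
    refine (ENNReal.rpow_tsum_le_of_forall_notMem_eq_zero (𝒰.neighbors_finite i)
      (𝒰.ncard_neighbors_le i) (fun j hj => by simp [hj]) hp).trans ?_
    gcongr with j
    by_cases hij : j ∈ 𝒰.neighbors i
    · simpa [hij] using rpow_mul_inv_measure_mul_le_setLAverage hW c hp0.le hij hx
    · simp [hij, ENNReal.zero_rpow_of_pos hp0]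
  · simp [hx, ENNReal.zero_rpow_of_pos hp0]

lemma lintegral_rpow_bumpSum_neighborSum_le [Countable I] (hWm : Measurable W)
    (hW : 𝒰.NeighborComparable W K) (c : I → ℝ≥0∞) {p : ℝ} (hp : 1 ≤ p) :
    ∫⁻ x, 𝒰.bumpSum (𝒰.neighborSum c) W x ^ p ∂μ ≤
      (𝒰.N : ℝ≥0∞) ^ (p - 1) * (𝒰.N : ℝ≥0∞) ^ (p - 1) * (𝒰.Ctilde * 𝒰.N * 𝒰.N) *
        (𝒰.Ctilde * K) ^ p * ∫⁻ x, 𝒰.bumpSum c W x ^ p ∂μ := by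
  have hp0 : 0 ≤ p := by linarith
  have hFm : Measurable fun y => 𝒰.bumpSum c W y ^ p := (measurable_bumpSum hWm c).pow_const p
  calc ∫⁻ x, 𝒰.bumpSum (𝒰.neighborSum c) W x ^ p ∂μ
      ≤ (𝒰.N : ℝ≥0∞) ^ (p - 1) * (𝒰.N : ℝ≥0∞) ^ (p - 1) *
          ∫⁻ x, ∑' i, (𝒰.U i).indicator (fun _ => ∑' j, (𝒰.neighbors i).indicator
            (fun j => ⨍⁻ y in 𝒰.U j, (𝒰.Ctilde * K * 𝒰.bumpSum c W y) ^ p ∂μ) j) x ∂μ := by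
        rw [← lintegral_const_mul' _ _ (by finiteness)]
        exact lintegral_mono (rpow_bumpSum_neighborSum_le hW c hp)
    _ = (𝒰.N : ℝ≥0∞) ^ (p - 1) * (𝒰.N : ℝ≥0∞) ^ (p - 1) *
          ∑' i, μ (𝒰.U i) * ∑' j, (𝒰.neighbors i).indicator
            (fun j => ⨍⁻ y in 𝒰.U j, (𝒰.Ctilde * K * 𝒰.bumpSum c W y) ^ p ∂μ) j := by
        rw [lintegral_tsum fun i => (measurable_const.indicator (𝒰.measU i)).aemeasurable]
        simp_rw [lintegral_indicator_const (𝒰.measU _), mul_comm]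
    _ ≤ (𝒰.N : ℝ≥0∞) ^ (p - 1) * (𝒰.N : ℝ≥0∞) ^ (p - 1) *
          (𝒰.Ctilde * 𝒰.N * 𝒰.N * ∫⁻ y, (𝒰.Ctilde * K * 𝒰.bumpSum c W y) ^ p ∂μ) := by
        gcongr
        exact tsum_measure_mul_tsum_setLAverage_le
          ((measurable_const.mul (measurable_bumpSum hWm c)).pow_const p)
    _ = _ := by
        simp_rw [ENNReal.mul_rpow_of_nonneg _ _ hp0]
        rw [lintegral_const_mul _ hFm]
        ring

lemma exists_eLpNorm_bumpSum_neighborSum_le [Countable I] (hK : K ≠ ⊤) (hWm : Measurable W)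
    (hW : 𝒰.NeighborComparable W K) {p : ℝ≥0∞} (hp : 1 ≤ p) :
    ∃ C < ⊤, ∀ c, eLpNorm (𝒰.bumpSum (𝒰.neighborSum c) W) p μ ≤
      C * eLpNorm (𝒰.bumpSum c W) p μ := by
  have hCt : 𝒰.Ctilde ≠ ⊤ := 𝒰.CtildeFin.ne
  rcases eq_or_ne p ⊤ with rfl | hpt
  · exact ⟨_, by finiteness, eLpNorm_top_bumpSum_neighborSum_le hW⟩
  have hp1 : 1 ≤ p.toReal := by
    simpa using ENNReal.toReal_mono hpt hp
  exact ⟨_, by finiteness, fun c => eLpNorm_le_rpow_mul_of_lintegral_rpow_le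
    (one_pos.trans_le hp).ne' hpt (lintegral_rpow_bumpSum_neighborSum_le hWm hW c hp1)⟩

lemma neighborComparable_ofReal {w : X → ℝ} (hwpos : ∀ x, 0 < w x) {C : ℝ}
    (hcover : ∀ i, ∀ x ∈ 𝒰.U i, ∀ y ∈ 𝒰.U i, mw w x y ≤ C) :
    𝒰.NeighborComparable (fun x => ENNReal.ofReal (w x)) (ENNReal.ofReal C ^ 2) := by
  rintro i j ⟨z, hzi, hzj⟩ x hx y hy
  have hxz := le_mul_of_mw_le (hwpos z) (hcover i x hx z hzi)
  have hzy := le_mul_of_mw_le (hwpos y) (hcover j z hzj y hy)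
  have hC : 0 ≤ C := (pos_of_mul_pos_left ((hwpos x).trans_le hxz) (hwpos z).le).le
  rw [sq, ← ENNReal.ofReal_mul hC, ← ENNReal.ofReal_mul (mul_nonneg hC hC)]
  refine ENNReal.ofReal_le_ofReal (hxz.trans ?_)
  rw [mul_assoc]
  gcongr

lemma eLpNorm_tsum_mul_indicator_mul_eq {c : I → ℝ} (hc : ∀ i, 0 ≤ c i) {w : X → ℝ}
    (hw : ∀ x, 0 ≤ w x) (p : ℝ≥0∞) :
    eLpNorm (fun x => (∑' i, c i * (μ (𝒰.U i)).toReal⁻¹ *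
        (𝒰.U i).indicator (fun _ => (1 : ℝ)) x) * w x) p μ =
      eLpNorm (𝒰.bumpSum (fun i => ENNReal.ofReal (c i)) fun x => ENNReal.ofReal (w x)) p μ := by
  rw [← eLpNorm_enorm]
  congr 1
  funext x
  have hnn : ∀ i, 0 ≤ c i * (μ (𝒰.U i)).toReal⁻¹ * (𝒰.U i).indicator (fun _ => (1 : ℝ)) x :=
    fun i => mul_nonneg (mul_nonneg (hc i) (inv_nonneg.mpr ENNReal.toReal_nonneg))
      (Set.indicator_nonneg (fun _ _ => zero_le_one) x)
  have hsum : Summable fun i => c i * (μ (𝒰.U i)).toReal⁻¹ *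
      (𝒰.U i).indicator (fun _ => (1 : ℝ)) x :=
    summable_of_ne_finset_zero (s := (𝒰.setOf_mem_finite x).toFinset) fun i hi => by
      simp_all
  rw [enorm_mul, Real.enorm_eq_ofReal (tsum_nonneg hnn), Real.enorm_eq_ofReal (hw x),
    ENNReal.ofReal_tsum_of_nonneg hnn hsum, bumpSum]
  congr 1
  refine tsum_congr fun i => ?_
  rw [ENNReal.ofReal_mul (mul_nonneg (hc i) (inv_nonneg.mpr ENNReal.toReal_nonneg)),
    ENNReal.ofReal_mul (hc i), ← ENNReal.toReal_inv,
    ENNReal.ofReal_toReal (ENNReal.inv_ne_top.mpr (𝒰.measure_ne_zero i))]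
  by_cases hx : x ∈ 𝒰.U i <;> simp [hx]

lemma ofReal_tsum_subtype_eq_neighborSum {c : I → ℝ} (hc : ∀ i, 0 ≤ c i) :
    (fun i => ENNReal.ofReal (∑' j : {j : I // (𝒰.U i ∩ 𝒰.U j).Nonempty}, c j)) =
      𝒰.neighborSum fun j => ENNReal.ofReal (c j) := by
  funext i
  have : Finite {j : I // (𝒰.U i ∩ 𝒰.U j).Nonempty} := (𝒰.neighbors_finite i).to_subtype
  rw [ENNReal.ofReal_tsum_of_nonneg (f := fun j : {j : I // (𝒰.U i ∩ 𝒰.U j).Nonempty} => c j)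
    (fun j => hc j) Summable.of_finite]
  exact tsum_subtype (𝒰.neighbors i) fun j => ENNReal.ofReal (c j)

end ModCover

theorem Ynatural_U_regular_general
    {X : Type*} [TopologicalSpace X] [MeasurableSpace X] [BorelSpace X]
    (μ : MeasureTheory.Measure X)
    {I : Type*} [Countable I]
    (𝒰 : ModCover X μ I)
    (w : X → ℝ) (hw : Continuous w) (hwpos : ∀ x, 0 < w x)
    (CmU : ℝ) (hcover : ∀ i, ∀ x ∈ 𝒰.U i, ∀ y ∈ 𝒰.U i, mw w x y ≤ CmU) :
    ∀ p : ℝ≥0∞, 1 ≤ p →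
      ∃ C : ℝ≥0∞, 0 < C ∧ C < ⊤ ∧
        ∀ lam : I → ℝ, (∀ i, 0 ≤ lam i) →
          MeasureTheory.eLpNorm
              (fun x => (∑' i, (∑' j : {j : I // (𝒰.U i ∩ 𝒰.U j).Nonempty}, lam j) *
                  (μ (𝒰.U i)).toReal⁻¹ * (𝒰.U i).indicator (fun _ => (1 : ℝ)) x) * w x) p μ ≤
            C * MeasureTheory.eLpNorm
              (fun x => (∑' i, lam i * (μ (𝒰.U i)).toReal⁻¹ *
                  (𝒰.U i).indicator (fun _ => (1 : ℝ)) x) * w x) p μ := by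
  intro p hp
  obtain ⟨C, hC, hbound⟩ := ModCover.exists_eLpNorm_bumpSum_neighborSum_le (by finiteness)
    hw.measurable.ennreal_ofReal (ModCover.neighborComparable_ofReal hwpos hcover) hp
  refine ⟨max C 1, by simp, max_lt hC ENNReal.one_lt_top, fun lam hlam => ?_⟩
  have hw0 : ∀ x, 0 ≤ w x := fun x => (hwpos x).le
  rw [ModCover.eLpNorm_tsum_mul_indicator_mul_eq
      (c := fun i => ∑' j : {j : I // (𝒰.U i ∩ 𝒰.U j).Nonempty}, lam j)
      (fun i => tsum_nonneg fun j => hlam j) hw0,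
    ModCover.eLpNorm_tsum_mul_indicator_mul_eq hlam hw0,
    ModCover.ofReal_tsum_subtype_eq_neighborSum hlam]
  exact (hbound _).trans (by gcongr; exact le_max_left _ _)

/-- The sequence spaces `(L^p_w)^♮` are `U`-regular: the map
`(λᵢ) ↦ (λᵢ⁺)` with `λᵢ⁺ = ∑_{j∈i*} λⱼ`, `i* = {j : Uᵢ ∩ Uⱼ ≠ ∅}`, is bounded. -/
theorem Ynatural_U_regular
    {X : Type*} [TopologicalSpace X] [T2Space X] [LocallyCompactSpace X]
    [SigmaCompactSpace X] [MeasurableSpace X] [BorelSpace X]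
    (μ : MeasureTheory.Measure X) [μ.Regular] [μ.IsOpenPosMeasure]
    {I : Type*} [Countable I]
    (𝒰 : ModCover X μ I)
    (w : X → ℝ) (hw : Continuous w) (hwpos : ∀ x, 0 < w x)
    (CmU : ℝ) (hcover : ∀ i, ∀ x ∈ 𝒰.U i, ∀ y ∈ 𝒰.U i, mw w x y ≤ CmU) :
    ∀ p : ℝ≥0∞, 1 ≤ p →
      ∃ C : ℝ≥0∞, 0 < C ∧ C < ⊤ ∧
        ∀ lam : I → ℝ, (∀ i, 0 ≤ lam i) →
          MeasureTheory.eLpNorm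
              (fun x => (∑' i, (∑' j : {j : I // (𝒰.U i ∩ 𝒰.U j).Nonempty}, lam j) *
                  (μ (𝒰.U i)).toReal⁻¹ * (𝒰.U i).indicator (fun _ => (1 : ℝ)) x) * w x) p μ ≤
            C * MeasureTheory.eLpNorm
              (fun x => (∑' i, lam i * (μ (𝒰.U i)).toReal⁻¹ *
                  (𝒰.U i).indicator (fun _ => (1 : ℝ)) x) * w x) p μ :=
  Ynatural_U_regular_general μ 𝒰 w hw hwpos CmU hcover
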